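/- arXiv:1903.03662 — 2 statements merged into one kernel-verified Lean document; each statement's English description precedes it below -/
import Mathlib

section
/- Existence of a unique maximal Rule-2 set: let G be an ADMG with vertex set V (for instance an extended graph G^e), and let Y, W, X be disjoint subsets of V. Define Z* = { Z_i ∈ W : (Y(x,z_i) ⊥ Z_i(x,z_i) | (W \ {Z_i})(x,z_i))_{G(x,z_i)} }. Then Z* itself satisfies the Rule-2 condition, i.e., (Y(x,z*) ⊥ Z*(x,z*) | (W \ Z*)(x,z*))_{G(x,z*)}, and every Z ⊆ W satisfying (Y(x,z) ⊥ Z(x,z) | (W \ Z)(x,z))_{G(x,z)} is contained in Z*; hence Z* is the unique maximal subset of W to which Rule 2 applies. -/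
/-! ### Mixed graphs, walks, m-separation, SWIGs -/

/-- An acyclic directed mixed graph (directedness data; acyclicity is stated separately). -/
structure MixedGraph (V : Type) where
  /-- directed edges `i → j` -/
  dir : V → V → Prop
  /-- bidirected edges `i ↔ j` -/
  bi : V → V → Prop
  bi_symm : ∀ i j, bi i j → bi j i

namespace MixedGraph

variable {V : Type}

/-- There is no directed cycle. -/
def Acyclic (G : MixedGraph V) : Prop := ∀ v, ¬ Relation.TransGen G.dir v v

/-- `v` is a descendant of `s` (reflexively). -/
def Desc (G : MixedGraph V) (s v : V) : Prop := Relation.ReflTransGen G.dir s v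

/-- The set of ancestors of the set `W` (including `W` itself). -/
def AncSet (G : MixedGraph V) (W : Set V) : Set V := {v | ∃ w ∈ W, Relation.ReflTransGen G.dir v w}

/-- There is an edge between `a` and `b` carrying an arrowhead at `a` iff `ha = true`
and an arrowhead at `b` iff `hb = true`. -/
def Step (G : MixedGraph V) (a b : V) (ha hb : Bool) : Prop :=
  match ha, hb with
  | false, true => G.dir a b
  | true, false => G.dir b a
  | true, true => G.bi a b
  | false, false => False

/-- Walks (with at least one edge) in a mixed graph, remembering arrowhead marks. -/
inductive Walk (G : MixedGraph V) : V → V → Type where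
  | single {a b : V} (ha hb : Bool) (h : G.Step a b ha hb) : Walk G a b
  | cons {a b c : V} (ha hb : Bool) (h : G.Step a b ha hb) (w : Walk G b c) : Walk G a c

/-- The arrowhead mark at the first vertex of a walk. -/
def Walk.firstArrow {G : MixedGraph V} : ∀ {x y : V}, Walk G x y → Bool
  | _, _, .single ha _ _ => ha
  | _, _, .cons ha _ _ _ => ha

/-- The list of vertices visited by a walk. -/
def Walk.support {G : MixedGraph V} : ∀ {x y : V}, Walk G x y → List V
  | x, y, .single _ _ _ => [x, y]
  | x, _, .cons _ _ _ w => x :: w.support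

/-- A walk is a path if it has no repeated vertices. -/
def Walk.IsPath {G : MixedGraph V} {x y : V} (w : Walk G x y) : Prop := w.support.Nodup

/-- A walk is blocked by the set `C` if some intermediate vertex of it is a non-collider
belonging to `C`, or a collider without descendants in `C`. -/
def Walk.Blocked (G : MixedGraph V) (C : Set V) : ∀ {x y : V}, Walk G x y → Prop
  | _, _, .single _ _ _ => False
  | _, _, .cons (b := b) _ hb _ w =>
      (if hb = true ∧ w.firstArrow = true then ∀ d, G.Desc b d → d ∉ C else b ∈ C)
        ∨ Walk.Blocked G C w

/-- The intermediate (non-endpoint) vertices of a walk. -/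
def Walk.inner {G : MixedGraph V} : ∀ {x y : V}, Walk G x y → List V
  | _, _, .single _ _ _ => []
  | _, _, .cons (b := b) _ _ _ w => b :: w.inner

/-- m-separation relative to a set `R`: every path from `Y` to `Z` all of whose
non-endpoint vertices lie in `R` is blocked by `C`.  (In a SWIG, `R` is taken to be the
set of random vertices.) -/
def MSepIn (G : MixedGraph V) (R : Set V) (Y Z C : Set V) : Prop :=
  ∀ y ∈ Y, ∀ z ∈ Z, ∀ w : G.Walk y z, w.IsPath → (∀ v ∈ w.inner, v ∈ R) →
    Walk.Blocked G C w

/-- m-separation: every path from `Y` to `Z` is blocked by `C`. -/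
def MSep (G : MixedGraph V) (Y Z C : Set V) : Prop :=
  MSepIn G Set.univ Y Z C

/-- The single world intervention graph obtained by splitting every vertex in `A`
into a random half `Sum.inl` (inheriting all edges with an arrowhead at it) and a
fixed half `Sum.inr` (inheriting all outgoing directed edges).  Vertices `Sum.inl i`
are the random vertices; vertices `Sum.inr i` for `i ∈ A` are the fixed vertices
(`Sum.inr i` for `i ∉ A` is an isolated junk vertex). -/
def swig (G : MixedGraph V) (A : Set V) : MixedGraph (V ⊕ V) where
  dir x y :=
    match x, y with
    | Sum.inl i, Sum.inl j => G.dir i j ∧ i ∉ A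
    | Sum.inr i, Sum.inl j => G.dir i j ∧ i ∈ A
    | _, _ => False
  bi x y :=
    match x, y with
    | Sum.inl i, Sum.inl j => G.bi i j
    | _, _ => False
  bi_symm := by
    rintro (i | i) (j | j) h
    · exact G.bi_symm i j h
    · exact False.elim h
    · exact False.elim h
    · exact False.elim h

/-- `G` with all edges carrying an arrowhead at a vertex of `X` removed (Pearl's `G_{X̄}`). -/
def removeInto (G : MixedGraph V) (X : Set V) : MixedGraph V where
  dir i j := G.dir i j ∧ j ∉ X
  bi i j := G.bi i j ∧ i ∉ X ∧ j ∉ X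
  bi_symm := fun i j h => ⟨G.bi_symm i j h.1, h.2.2, h.2.1⟩

/-- `G` with all directed edges out of a vertex of `Z` removed (Pearl's `G_{Z̲}`). -/
def removeOut (G : MixedGraph V) (Z : Set V) : MixedGraph V where
  dir i j := G.dir i j ∧ i ∉ Z
  bi := G.bi
  bi_symm := G.bi_symm

end MixedGraph

namespace MixedGraph

variable {V : Type} {G : MixedGraph V}

/-- The arrowhead mark at the last vertex of a walk. -/
def Walk.lastArrow {G : MixedGraph V} : ∀ {x y : V}, Walk G x y → Bool
  | _, _, .single _ hb _ => hb
  | _, _, .cons _ _ _ w => w.lastArrow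

/-- Number of edges of a walk. -/
def Walk.length {G : MixedGraph V} : ∀ {x y : V}, Walk G x y → Nat
  | _, _, .single _ _ _ => 1
  | _, _, .cons _ _ _ w => w.length + 1

/-- The blocking condition at an inner vertex `v` whose two adjacent edges carry marks
`h1`, `h2` at `v`. -/
def BCond (G : MixedGraph V) (C : Set V) (v : V) (h1 h2 : Bool) : Prop :=
  if h1 = true ∧ h2 = true then ∀ d, G.Desc v d → d ∉ C else v ∈ C

lemma blocked_single {a b : V} {ha hb : Bool} {h : G.Step a b ha hb} {C : Set V} :
    Walk.Blocked G C (.single ha hb h) ↔ False := Iff.rfl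

lemma blocked_cons {a b c : V} {ha hb : Bool} {h : G.Step a b ha hb} {w : Walk G b c}
    {C : Set V} :
    Walk.Blocked G C (.cons ha hb h w) ↔ BCond G C b hb w.firstArrow ∨ Walk.Blocked G C w :=
  Iff.rfl

@[simp] lemma firstArrow_single {a b : V} {ha hb : Bool} {h : G.Step a b ha hb} :
    (Walk.single ha hb h).firstArrow = ha := rfl

@[simp] lemma firstArrow_cons {a b c : V} {ha hb : Bool} {h : G.Step a b ha hb}
    {w : Walk G b c} : (Walk.cons ha hb h w).firstArrow = ha := rfl

@[simp] lemma lastArrow_single {a b : V} {ha hb : Bool} {h : G.Step a b ha hb} :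
    (Walk.single ha hb h).lastArrow = hb := rfl

@[simp] lemma lastArrow_cons {a b c : V} {ha hb : Bool} {h : G.Step a b ha hb}
    {w : Walk G b c} : (Walk.cons ha hb h w).lastArrow = w.lastArrow := rfl

@[simp] lemma support_single {a b : V} {ha hb : Bool} {h : G.Step a b ha hb} :
    (Walk.single ha hb h).support = [a, b] := rfl

@[simp] lemma support_cons {a b c : V} {ha hb : Bool} {h : G.Step a b ha hb}
    {w : Walk G b c} : (Walk.cons ha hb h w).support = a :: w.support := rfl

@[simp] lemma length_single {a b : V} {ha hb : Bool} {h : G.Step a b ha hb} :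
    (Walk.single ha hb h).length = 1 := rfl

@[simp] lemma length_cons {a b c : V} {ha hb : Bool} {h : G.Step a b ha hb}
    {w : Walk G b c} : (Walk.cons ha hb h w).length = w.length + 1 := rfl

@[simp] lemma inner_single {a b : V} {ha hb : Bool} {h : G.Step a b ha hb} :
    (Walk.single ha hb h).inner = [] := rfl

@[simp] lemma inner_cons {a b c : V} {ha hb : Bool} {h : G.Step a b ha hb}
    {w : Walk G b c} : (Walk.cons ha hb h w).inner = b :: w.inner := rfl

lemma start_mem_support : ∀ {a b : V} (w : Walk G a b), a ∈ w.support
  | _, _, .single _ _ _ => List.mem_cons_self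
  | _, _, .cons _ _ _ _ => List.mem_cons_self

lemma one_le_length : ∀ {a b : V} (w : Walk G a b), 1 ≤ w.length
  | _, _, .single _ _ _ => le_refl _
  | _, _, .cons _ _ _ w => Nat.le_succ_of_le (one_le_length w)

lemma bcond_tt {C : Set V} {v : V} :
    BCond G C v true true ↔ ∀ d, G.Desc v d → d ∉ C := by simp [BCond]

lemma bcond_fst_false {C : Set V} {v : V} {h2 : Bool} :
    BCond G C v false h2 ↔ v ∈ C := by simp [BCond]

lemma bcond_snd_false {C : Set V} {v : V} {h1 : Bool} :
    BCond G C v h1 false ↔ v ∈ C := by simp [BCond]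

lemma not_bcond_tt {C : Set V} {v : V} (h : ¬ BCond G C v true true) :
    ∃ d, G.Desc v d ∧ d ∈ C := by
  rw [bcond_tt] at h; push_neg at h; simpa using h

lemma step_not_ff {a b : V} (h : G.Step a b false false) : False := h

end MixedGraph
namespace MixedGraph

variable {V : Type} {G : MixedGraph V}

lemma cut {C : Set V} : ∀ {a c : V} (w : Walk G a c) (v : V), v ∈ w.support → v ≠ a → v ≠ c →
    ∃ (σ : Walk G a v) (ρ : Walk G v c),
      σ.length + ρ.length = w.length ∧
      σ.firstArrow = w.firstArrow ∧
      (∀ x ∈ σ.support, x ∈ w.support) ∧ (∀ x ∈ ρ.support, x ∈ w.support) ∧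
      (Walk.Blocked G C w ↔
        Walk.Blocked G C σ ∨ Walk.Blocked G C ρ ∨ BCond G C v σ.lastArrow ρ.firstArrow) := by
  intro a c w
  induction w with
  | single ha hb h =>
      intro v hv hva hvc
      simp only [support_single, List.mem_cons, List.mem_singleton] at hv
      rcases hv with rfl | hv
      · exact absurd rfl hva
      · simp only [List.not_mem_nil, or_false] at hv; exact absurd hv hvc
  | cons ha hb h w₂ IH =>
      intro v hv hva hvc
      rename_i a' b' c'
      simp only [support_cons, List.mem_cons] at hv
      rcases hv with rfl | hv
      · exact absurd rfl hva
      by_cases hvb : v = b'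
      · subst hvb
        refine ⟨.single ha hb h, w₂, by simp [Nat.add_comm], rfl, ?_, ?_, ?_⟩
        · intro x hx; simp only [support_single, List.mem_cons, List.mem_singleton] at hx
          rcases hx with rfl | hx
          · simp
          · simp only [List.not_mem_nil, or_false] at hx; subst hx
            simp [start_mem_support]
        · intro x hx; simp [hx]
        · rw [blocked_cons, blocked_single, lastArrow_single]
          tauto
      · obtain ⟨σ', ρ', hlen, hfa, hsσ, hsρ, hbl⟩ := IH v hv hvb hvc
        refine ⟨.cons ha hb h σ', ρ', by simp [← hlen, Nat.add_assoc, Nat.add_comm ρ'.length 1,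
            Nat.add_left_comm], rfl, ?_, ?_, ?_⟩
        · intro x hx; simp only [support_cons, List.mem_cons] at hx ⊢
          rcases hx with rfl | hx
          · exact Or.inl rfl
          · exact Or.inr (hsσ x hx)
        · intro x hx; simp only [support_cons, List.mem_cons]
          exact Or.inr (hsρ x hx)
        · rw [blocked_cons, blocked_cons, lastArrow_cons, hfa, hbl]
          tauto

lemma dseg {C : Set V} : ∀ {s t : V} (σ : Walk G s t), ¬ Walk.Blocked G C σ →
    σ.firstArrow = false → σ.lastArrow = false → ∃ d, G.Desc s d ∧ d ∈ C := by
  intro s t σ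
  induction σ with
  | single ha hb h =>
      intro _ h1 h2
      simp only [firstArrow_single] at h1
      simp only [lastArrow_single] at h2
      subst h1; subst h2
      exact absurd h step_not_ff
  | cons ha hb h w₂ IH =>
      intro hnb h1 h2
      simp only [firstArrow_cons] at h1
      subst h1
      cases hb with
      | false => exact absurd h step_not_ff
      | true =>
          rw [blocked_cons, not_or] at hnb
          obtain ⟨hJ, hB⟩ := hnb
          have hdir : G.dir _ _ := h
          cases hfa : w₂.firstArrow with
          | true =>
              rw [hfa, bcond_tt] at hJ
              obtain ⟨d, hd, hdC⟩ := not_bcond_tt hJ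
              exact ⟨d, Relation.ReflTransGen.head hdir hd, hdC⟩
          | false =>
              obtain ⟨d, hd, hdC⟩ := IH hB hfa (by simpa using h2)
              exact ⟨d, Relation.ReflTransGen.head hdir hd, hdC⟩

end MixedGraph
namespace MixedGraph

variable {V : Type} {G : MixedGraph V}

/-- From an unblocked walk, extract an unblocked path with the same endpoints. -/
lemma walk_to_path {C : Set V} : ∀ (n : ℕ) {y z : V} (w : Walk G y z), w.length ≤ n →
    y ≠ z → ¬ Walk.Blocked G C w →
    ∃ p : Walk G y z, p.IsPath ∧ ¬ Walk.Blocked G C p ∧ (∀ x ∈ p.support, x ∈ w.support) ∧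
      (p.firstArrow = w.firstArrow ∨ (p.firstArrow = true ∧ ∃ d, G.Desc y d ∧ d ∈ C) ∨
        (p.firstArrow = false ∧ y ∉ C)) := by
  intro n
  induction n with
  | zero =>
      intro y z w hlen
      exact absurd (le_trans (one_le_length w) hlen) (by simp)
  | succ n IH =>
      intro y z w hlen hyz hnb
      cases w with
      | single ha hb h =>
          exact ⟨.single ha hb h, by simp [Walk.IsPath, hyz], hnb, fun x hx => hx, Or.inl rfl⟩
      | cons ha hb h w₂ =>
          rename_i b
          rw [blocked_cons, not_or] at hnb
          obtain ⟨hJ, hB₂⟩ := hnb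
          by_cases hbz : b = z
          · subst hbz
            refine ⟨.single ha hb h, by simp [Walk.IsPath, hyz], by rw [blocked_single]; simp,
              ?_, Or.inl rfl⟩
            intro x hx
            simp only [support_single, List.mem_cons, List.mem_singleton] at hx
            rcases hx with rfl | hx
            · simp
            · simp only [List.not_mem_nil, or_false] at hx; subst hx
              simp [start_mem_support]
          by_cases hby : b = y
          · subst hby
            have hlen₂ : w₂.length ≤ n := by
              simp only [length_cons] at hlen; omega
            obtain ⟨p, hp, hpb, hps, hF⟩ := IH w₂ hlen₂ hyz hB₂
            refine ⟨p, hp, hpb, ?_, ?_⟩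
            · intro x hx; simp only [support_cons, List.mem_cons]; exact Or.inr (hps x hx)
            · rcases hF with hF | hF | hF
              · -- p.firstArrow = w₂.firstArrow
                by_cases hfa : p.firstArrow = ha
                · exact Or.inl (by simpa using hfa)
                · cases hpa : p.firstArrow with
                  | true =>
                      have hha : ha = false := by
                        cases ha
                        · rfl
                        · exact absurd hpa hfa
                      have hhb : hb = true := by
                        cases hb
                        · rw [hha] at h; exact absurd h step_not_ff
                        · rfl
                      refine Or.inr (Or.inl ⟨rfl, ?_⟩)
                      rw [hhb, hF.symm.trans hpa, bcond_tt] at hJ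
                      exact not_bcond_tt hJ
                  | false =>
                      refine Or.inr (Or.inr ⟨rfl, ?_⟩)
                      rw [hF.symm.trans hpa, bcond_snd_false] at hJ
                      exact hJ
              · exact Or.inr (Or.inl hF)
              · exact Or.inr (Or.inr hF)
          by_cases hyin : y ∈ w₂.support
          · obtain ⟨σ', ρ', hlen', hfaσ, hsσ, hsρ, hiff⟩ :=
              cut (C := C) w₂ y hyin (fun hy => hby hy.symm) hyz
            rw [hiff, not_or, not_or] at hB₂
            obtain ⟨hBσ, hBρ, hJ'⟩ := hB₂
            have hlenρ : ρ'.length ≤ n := by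
              have h1 := one_le_length σ'
              simp only [length_cons] at hlen; omega
            obtain ⟨p, hp, hpb, hps, hF⟩ := IH ρ' hlenρ hyz hBρ
            refine ⟨p, hp, hpb, ?_, ?_⟩
            · intro x hx
              simp only [support_cons, List.mem_cons]
              exact Or.inr (hsρ x (hps x hx))
            · rcases hF with hF | hF | hF
              · by_cases hfa : p.firstArrow = ha
                · exact Or.inl (by simpa using hfa)
                · cases hpa : p.firstArrow with
                  | true =>
                      have hha : ha = false := by
                        cases ha
                        · rfl
                        · exact absurd hpa hfa
                      refine Or.inr (Or.inl ⟨rfl, ?_⟩)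
                      cases hla : σ'.lastArrow with
                      | true =>
                          rw [hla, hF.symm.trans hpa, bcond_tt] at hJ'
                          exact not_bcond_tt hJ'
                      | false =>
                          refine dseg (Walk.cons ha hb h σ') ?_ (by simp [hha]) (by simp [hla])
                          rw [blocked_cons, not_or]
                          exact ⟨by rw [hfaσ]; exact hJ, hBσ⟩
                  | false =>
                      refine Or.inr (Or.inr ⟨rfl, ?_⟩)
                      rw [hF.symm.trans hpa, bcond_snd_false] at hJ'
                      exact hJ'
              · exact Or.inr (Or.inl hF)
              · exact Or.inr (Or.inr hF)
          · -- y not in w₂.support : recurse and prepend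
            have hlen₂ : w₂.length ≤ n := by simp only [length_cons] at hlen; omega
            obtain ⟨p', hp', hpb', hps', hF'⟩ := IH w₂ hlen₂ hbz hB₂
            refine ⟨.cons ha hb h p', ?_, ?_, ?_, Or.inl rfl⟩
            · rw [Walk.IsPath, support_cons, List.nodup_cons]
              exact ⟨fun hy => hyin (hps' y hy), hp'⟩
            · rw [blocked_cons, not_or]
              refine ⟨?_, hpb'⟩
              rcases hF' with hF' | hF' | hF'
              · rw [hF']; exact hJ
              · obtain ⟨hpa, d, hd, hdC⟩ := hF'
                rw [hpa]
                cases hb with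
                | false => rw [bcond_fst_false]; rw [bcond_fst_false] at hJ; exact hJ
                | true =>
                    rw [bcond_tt]
                    intro hall
                    exact hall d hd hdC
              · obtain ⟨hpa, hbC⟩ := hF'
                rw [hpa, bcond_snd_false]
                exact hbC
            · intro x hx
              simp only [support_cons, List.mem_cons] at hx ⊢
              rcases hx with rfl | hx
              · exact Or.inl rfl
              · exact Or.inr (hps' x hx)

end MixedGraph
namespace MixedGraph

variable {V : Type} {G : MixedGraph V}

lemma step_lift {A : Set V} {a b : V} {ha hb : Bool} :
    Step (removeOut G A) a b ha hb ↔ Step (swig G A) (Sum.inl a) (Sum.inl b) ha hb := by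
  cases ha <;> cases hb <;> simp [Step, swig, removeOut]

lemma desc_lift {A : Set V} {v d : V} (h : Desc (removeOut G A) v d) :
    Desc (swig G A) (Sum.inl v) (Sum.inl d) := by
  induction h with
  | refl => exact Relation.ReflTransGen.refl
  | tail _ hstep ih => exact Relation.ReflTransGen.tail ih hstep

lemma desc_proj {A : Set V} {v : V} {d : V ⊕ V} (h : Desc (swig G A) (Sum.inl v) d) :
    ∃ d', d = Sum.inl d' ∧ Desc (removeOut G A) v d' := by
  induction h with
  | refl => exact ⟨v, rfl, Relation.ReflTransGen.refl⟩
  | @tail m c hrt hstep ih =>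
      obtain ⟨m', rfl, hm⟩ := ih
      cases c with
      | inl c' => exact ⟨c', rfl, Relation.ReflTransGen.tail hm hstep⟩
      | inr c' => exact absurd hstep (fun hf => hf)

lemma desc_cond_iff {A C : Set V} {v : V} :
    (∀ d, (swig G A).Desc (Sum.inl v) d → d ∉ Sum.inl '' C) ↔
      (∀ d, (removeOut G A).Desc v d → d ∉ C) := by
  constructor
  · intro h d hd hdC
    exact h (Sum.inl d) (desc_lift hd) ⟨d, hdC, rfl⟩
  · intro h d hd hdC
    obtain ⟨d', rfl, hd'⟩ := desc_proj hd
    obtain ⟨d'', hd''C, heq⟩ := hdC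
    cases Sum.inl_injective heq
    exact h _ hd' hd''C

lemma bcond_lift_iff {A C : Set V} {v : V} {h1 h2 : Bool} :
    BCond (swig G A) (Sum.inl '' C) (Sum.inl v) h1 h2 ↔ BCond (removeOut G A) C v h1 h2 := by
  unfold BCond
  split
  · exact desc_cond_iff
  · exact Function.Injective.mem_set_image Sum.inl_injective

lemma walk_lift {A C : Set V} : ∀ {a b : V} (w : Walk (removeOut G A) a b),
    ∃ ω : Walk (swig G A) (Sum.inl a) (Sum.inl b),
      ω.firstArrow = w.firstArrow ∧ ω.support = w.support.map Sum.inl ∧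
      ω.inner = w.inner.map Sum.inl ∧
      (Walk.Blocked (swig G A) (Sum.inl '' C) ω ↔ Walk.Blocked (removeOut G A) C w) := by
  intro a b w
  induction w with
  | single ha hb h =>
      exact ⟨.single ha hb (step_lift.mp h), rfl, rfl, rfl, Iff.rfl⟩
  | cons ha hb h w₂ IH =>
      obtain ⟨ω₂, hfa, hsup, hinn, hbl⟩ := IH
      refine ⟨.cons ha hb (step_lift.mp h) ω₂, rfl, by simp [hsup], by simp [hinn], ?_⟩
      rw [blocked_cons, blocked_cons, hbl, hfa, bcond_lift_iff]

lemma walk_proj {A C : Set V} : ∀ {x q : V ⊕ V} (w : Walk (swig G A) x q) (a b : V),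
    x = Sum.inl a → q = Sum.inl b → (∀ v ∈ w.inner, ∃ u, v = Sum.inl u) →
    ∃ w' : Walk (removeOut G A) a b,
      w'.firstArrow = w.firstArrow ∧
      (Walk.Blocked (swig G A) (Sum.inl '' C) w ↔ Walk.Blocked (removeOut G A) C w') := by
  intro x q w
  induction w with
  | single ha hb h =>
      intro a b hx hq _
      subst hx; subst hq
      exact ⟨.single ha hb (step_lift.mpr h), rfl, Iff.rfl⟩
  | @cons x m q ha hb h w₂ IH =>
      intro a b hx hq hinn
      subst hx; subst hq
      obtain ⟨m', rfl⟩ := hinn m (by simp)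
      obtain ⟨w₂', hfa, hbl⟩ := IH m' b rfl rfl (fun v hv => hinn v (by simp [hv]))
      refine ⟨.cons ha hb (step_lift.mpr h) w₂', rfl, ?_⟩
      rw [blocked_cons, blocked_cons, hbl, ← hfa, bcond_lift_iff]

end MixedGraph
namespace MixedGraph

variable {V : Type} {G : MixedGraph V}

lemma msep_iff {A Y' Z' C : Set V} (hyz : ∀ y ∈ Y', ∀ z ∈ Z', y ≠ z) :
    MSepIn (G.swig A) (Set.range Sum.inl) (Sum.inl '' Y') (Sum.inl '' Z') (Sum.inl '' C) ↔
      ∀ y ∈ Y', ∀ z ∈ Z', ∀ w : (removeOut G A).Walk y z,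
        Walk.Blocked (removeOut G A) C w := by
  constructor
  · intro h y hy z hz w
    by_contra hw
    obtain ⟨p, hp, hpb, _, _⟩ := walk_to_path w.length w (le_refl _) (hyz y hy z hz) hw
    obtain ⟨ω, hfa, hsup, hinn, hbl⟩ := walk_lift (A := A) (C := C) p
    refine hpb (hbl.mp (h (Sum.inl y) ⟨y, hy, rfl⟩ (Sum.inl z) ⟨z, hz, rfl⟩ ω ?_ ?_))
    · rw [Walk.IsPath, hsup]
      exact List.Nodup.map Sum.inl_injective hp
    · intro v hv
      rw [hinn] at hv
      obtain ⟨u, _, rfl⟩ := List.mem_map.mp hv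
      exact ⟨u, rfl⟩
  · intro h u hu v hv ω hpath hinn
    obtain ⟨y, hy, rfl⟩ := hu
    obtain ⟨z, hz, rfl⟩ := hv
    have hinn' : ∀ x ∈ ω.inner, ∃ u, x = Sum.inl u := by
      intro x hx
      obtain ⟨u, hu⟩ := hinn x hx
      exact ⟨u, hu.symm⟩
    obtain ⟨w', hfa, hbl⟩ := walk_proj (C := C) ω y z rfl rfl hinn'
    exact hbl.mpr (h y hy z hz w')

lemma descend_dichotomy {X W Z : Set V} {zi : V} :
    ∀ {b d : V}, Relation.ReflTransGen (removeOut G (X ∪ {zi})).dir b d → d ∈ W \ {zi} →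
    b ∉ Z →
    (∃ d', Relation.ReflTransGen (removeOut G (X ∪ Z)).dir b d' ∧ d' ∈ W \ Z) ∨
    (b ∉ W ∧ ∃ u ∈ Z, ∃ ρ : Walk (removeOut G (X ∪ Z)) b u,
      ¬ Walk.Blocked (removeOut G (X ∪ Z)) (W \ Z) ρ ∧ ρ.firstArrow = false) := by
  intro b d hrt hd
  induction hrt using Relation.ReflTransGen.head_induction_on with
  | refl =>
      intro hbZ
      exact Or.inl ⟨d, Relation.ReflTransGen.refl, hd.1, hbZ⟩
  | @head b m hbm hmd IH =>
      intro hbZ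
      by_cases hbW : b ∈ W
      · exact Or.inl ⟨b, Relation.ReflTransGen.refl, hbW, hbZ⟩
      obtain ⟨hGbm, hbX⟩ := hbm
      have hbX' : b ∉ X ∪ Z := by
        intro hmem
        rcases hmem with hmem | hmem
        · exact hbX (Or.inl hmem)
        · exact hbZ hmem
      have hbm' : (removeOut G (X ∪ Z)).dir b m := ⟨hGbm, hbX'⟩
      by_cases hmZ : m ∈ Z
      · refine Or.inr ⟨hbW, m, hmZ, .single false true hbm', fun hf => hf, rfl⟩
      · rcases IH hmZ with ⟨d', hrt', hd'⟩ | ⟨hmW, u, huZ, ρ, hρ, hfa⟩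
        · exact Or.inl ⟨d', Relation.ReflTransGen.head hbm' hrt', hd'⟩
        · have hbm'' : Step (removeOut G (X ∪ Z)) b m false true := hbm'
          refine Or.inr ⟨hbW, u, huZ, .cons false true hbm'' ρ, ?_, rfl⟩
          rw [blocked_cons, not_or, hfa, bcond_snd_false]
          exact ⟨fun hm => hmW hm.1, hρ⟩

end MixedGraph
namespace MixedGraph

variable {V : Type} {G : MixedGraph V}

lemma mem_singleton' {a b : V} (h : a ∈ ({b} : Set V)) : a = b := h

lemma mem_of_eq_mem {a b : V} {S : Set V} (h : a = b) (hb : b ∈ S) : a ∈ S := by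
  rw [h]; exact hb

lemma desc_mono_sub {A B : Set V} (hAB : A ⊆ B) {b d : V}
    (h : Desc (removeOut G B) b d) : Desc (removeOut G A) b d :=
  Relation.ReflTransGen.mono (show ∀ x y, (removeOut G B).dir x y → (removeOut G A).dir x y from
    fun _ _ hpq => ⟨hpq.1, fun hm => hpq.2 (hAB hm)⟩) _ _ h

lemma not_blocked_single {a b : V} {ha hb : Bool} {h : G.Step a b ha hb} {C : Set V} :
    ¬ Walk.Blocked G C (.single ha hb h) := fun hf => hf

lemma L1 {X W Z : Set V} (hZW : Z ⊆ W) {zi : V} (hzi : zi ∈ Z) :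
    ∀ {a t : V} (w : Walk (removeOut G (X ∪ {zi})) a t), t = zi → a ∉ Z →
    ¬ Walk.Blocked (removeOut G (X ∪ {zi})) (W \ {zi}) w →
    ∃ u ∈ Z, ∃ ρ : Walk (removeOut G (X ∪ Z)) a u,
      ¬ Walk.Blocked (removeOut G (X ∪ Z)) (W \ Z) ρ ∧ ρ.firstArrow = w.firstArrow := by
  intro a t w
  induction w with
  | @single a t ha hb h =>
      intro ht hyZ hnb
      subst ht
      cases hb with
      | false =>
          cases ha with
          | false => exact absurd h step_not_ff
          | true => exact absurd (Or.inr rfl) h.2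
      | true =>
          cases ha with
          | false =>
              have estep : Step (removeOut G (X ∪ Z)) a t false true := by
                refine ⟨h.1, fun hm => ?_⟩
                rcases hm with hx | hz
                · exact h.2 (Or.inl hx)
                · exact hyZ hz
              exact ⟨t, hzi, .single false true estep, not_blocked_single, rfl⟩
          | true => exact ⟨t, hzi, .single true true h, not_blocked_single, rfl⟩
  | @cons a b t ha hb h w₂ IH =>
      intro ht hyZ hnb
      subst ht
      rw [blocked_cons, not_or] at hnb
      obtain ⟨hJ, hB₂⟩ := hnb
      by_cases hbZ : b ∈ Z
      · cases hb with
        | false =>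
            cases ha with
            | false => exact absurd h step_not_ff
            | true =>
                have hbzi : b ≠ t := fun hq => h.2 (Or.inr hq)
                rw [bcond_fst_false] at hJ
                exact absurd ⟨hZW hbZ, hbzi⟩ hJ
        | true =>
            cases ha with
            | false =>
                have estep : Step (removeOut G (X ∪ Z)) a b false true := by
                  refine ⟨h.1, fun hm => ?_⟩
                  rcases hm with hx | hz
                  · exact h.2 (Or.inl hx)
                  · exact hyZ hz
                exact ⟨b, hbZ, .single false true estep, not_blocked_single, rfl⟩
            | true => exact ⟨b, hbZ, .single true true h, not_blocked_single, rfl⟩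
      · obtain ⟨u, huZ, ρ', hρ', hfa⟩ := IH rfl hbZ hB₂
        have e' : Step (removeOut G (X ∪ Z)) a b ha hb := by
          cases ha <;> cases hb
          · exact absurd h step_not_ff
          · refine ⟨h.1, fun hm => ?_⟩
            rcases hm with hx | hz
            · exact h.2 (Or.inl hx)
            · exact hyZ hz
          · refine ⟨h.1, fun hm => ?_⟩
            rcases hm with hx | hz
            · exact h.2 (Or.inl hx)
            · exact hbZ hz
          · exact h
        have hbW' : b ∈ W \ Z → b ∈ W \ {t} :=
          fun hm => ⟨hm.1, fun hq => hbZ (mem_of_eq_mem (mem_singleton' hq) hzi)⟩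
        cases hb with
        | false =>
            refine ⟨u, huZ, .cons ha false e' ρ', ?_, rfl⟩
            rw [blocked_cons, not_or, bcond_fst_false]
            rw [bcond_fst_false] at hJ
            exact ⟨fun hm => hJ (hbW' hm), hρ'⟩
        | true =>
            cases hw2 : w₂.firstArrow with
            | false =>
                rw [hw2, bcond_snd_false] at hJ
                refine ⟨u, huZ, .cons ha true e' ρ', ?_, rfl⟩
                rw [blocked_cons, not_or, hfa, hw2, bcond_snd_false]
                exact ⟨fun hm => hJ (hbW' hm), hρ'⟩
            | true =>
                rw [hw2] at hJ
                obtain ⟨d, hdesc, hdC⟩ := not_bcond_tt hJ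
                rcases descend_dichotomy (G := G) hdesc hdC hbZ with
                  ⟨d', hrt', hd'⟩ | ⟨hbW, u', hu'Z, ρd, hρd, hfad⟩
                · refine ⟨u, huZ, .cons ha true e' ρ', ?_, rfl⟩
                  rw [blocked_cons, not_or, hfa, hw2, bcond_tt]
                  exact ⟨fun hall => hall d' hrt' hd', hρ'⟩
                · refine ⟨u', hu'Z, .cons ha true e' ρd, ?_, rfl⟩
                  rw [blocked_cons, not_or, hfad, bcond_snd_false]
                  exact ⟨fun hm => hbW hm.1, hρd⟩

lemma L2 {X W Z : Set V} (hZW : Z ⊆ W) :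
    ∀ {y z : V} (w : Walk (removeOut G (X ∪ Z)) y z), z ∈ Z → y ∉ Z →
    ¬ Walk.Blocked (removeOut G (X ∪ Z)) (W \ Z) w →
    ∃ zi ∈ Z, ∃ ρ : Walk (removeOut G (X ∪ {zi})) y zi,
      ¬ Walk.Blocked (removeOut G (X ∪ {zi})) (W \ {zi}) ρ ∧ ρ.firstArrow = w.firstArrow := by
  intro y z w
  induction w with
  | @single y z ha hb h =>
      intro hz hyZ hnb
      cases hb with
      | false =>
          cases ha with
          | false => exact absurd h step_not_ff
          | true => exact absurd (Or.inr hz) h.2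
      | true =>
          cases ha with
          | false =>
              have estep : Step (removeOut G (X ∪ {z})) y z false true := by
                refine ⟨h.1, fun hm => ?_⟩
                rcases hm with hx | hq
                · exact h.2 (Or.inl hx)
                · exact hyZ (mem_of_eq_mem (mem_singleton' hq) hz)
              exact ⟨z, hz, .single false true estep, not_blocked_single, rfl⟩
          | true => exact ⟨z, hz, .single true true h, not_blocked_single, rfl⟩
  | @cons y b z ha hb h w₂ IH =>
      intro hz hyZ hnb
      rw [blocked_cons, not_or] at hnb
      obtain ⟨hJ, hB₂⟩ := hnb
      by_cases hbZ : b ∈ Z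
      · cases hb with
        | false =>
            cases ha with
            | false => exact absurd h step_not_ff
            | true => exact absurd (Or.inr hbZ) h.2
        | true =>
            cases ha with
            | false =>
                have estep : Step (removeOut G (X ∪ {b})) y b false true := by
                  refine ⟨h.1, fun hm => ?_⟩
                  rcases hm with hx | hq
                  · exact h.2 (Or.inl hx)
                  · exact hyZ (mem_of_eq_mem (mem_singleton' hq) hbZ)
                exact ⟨b, hbZ, .single false true estep, not_blocked_single, rfl⟩
            | true => exact ⟨b, hbZ, .single true true h, not_blocked_single, rfl⟩
      · obtain ⟨zi, hziZ, ρ', hρ', hfa⟩ := IH hz hbZ hB₂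
        have e' : Step (removeOut G (X ∪ {zi})) y b ha hb := by
          cases ha <;> cases hb
          · exact absurd h step_not_ff
          · refine ⟨h.1, fun hm => ?_⟩
            rcases hm with hx | hq
            · exact h.2 (Or.inl hx)
            · exact hyZ (mem_of_eq_mem (mem_singleton' hq) hziZ)
          · refine ⟨h.1, fun hm => ?_⟩
            rcases hm with hx | hq
            · exact h.2 (Or.inl hx)
            · exact hbZ (mem_of_eq_mem (mem_singleton' hq) hziZ)
          · exact h
        refine ⟨zi, hziZ, .cons ha hb e' ρ', ?_, rfl⟩
        rw [blocked_cons, not_or, hfa]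
        refine ⟨?_, hρ'⟩
        cases hb with
        | false =>
            rw [bcond_fst_false]
            rw [bcond_fst_false] at hJ
            exact fun hm => hJ ⟨hm.1, hbZ⟩
        | true =>
            cases hw2 : w₂.firstArrow with
            | false =>
                rw [bcond_snd_false]
                rw [hw2, bcond_snd_false] at hJ
                exact fun hm => hJ ⟨hm.1, hbZ⟩
            | true =>
                rw [hw2] at hJ
                obtain ⟨d, hdesc, hdC⟩ := not_bcond_tt hJ
                rw [bcond_tt]
                intro hall
                refine hall d (desc_mono_sub ?_ hdesc)
                  ⟨hdC.1, fun hq => hdC.2 (mem_of_eq_mem (mem_singleton' hq) hziZ)⟩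
                intro p hp
                rcases hp with hx | hq
                · exact Or.inl hx
                · exact Or.inr (mem_of_eq_mem (mem_singleton' hq) hziZ)
end MixedGraph
open MixedGraph in
/-- (Corollary 2.) **Existence of a unique maximal Rule-2 set**: for an ADMG `G` (e.g. an
extended graph `G^e`) and disjoint `Y, W, X`, the set
`Z* = {Zᵢ ∈ W : (Y(x,zᵢ) ⊥ Zᵢ(x,zᵢ) | (W \ {Zᵢ})(x,zᵢ)) in G(x,zᵢ)}` itself satisfies the
Rule-2 condition, and contains every `Z ⊆ W` satisfying the Rule-2 condition; hence it is
the unique maximal subset of `W` to which Rule 2 applies. -/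
theorem maximal_rule2_set {V : Type} (G : MixedGraph V) (hacyc : G.Acyclic)
    (Y W X : Set V)
    (hYW : Disjoint Y W) (hYX : Disjoint Y X) (hWX : Disjoint W X)
    (Zstar : Set V)
    (hZstar : Zstar = {Zi | Zi ∈ W ∧
      MSepIn (G.swig (X ∪ {Zi})) (Set.range Sum.inl) (Sum.inl '' Y) (Sum.inl '' {Zi}) (Sum.inl '' (W \ {Zi}))}) :
    MSepIn (G.swig (X ∪ Zstar)) (Set.range Sum.inl) (Sum.inl '' Y) (Sum.inl '' Zstar) (Sum.inl '' (W \ Zstar)) ∧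
      (∀ Z ⊆ W,
        MSepIn (G.swig (X ∪ Z)) (Set.range Sum.inl) (Sum.inl '' Y) (Sum.inl '' Z) (Sum.inl '' (W \ Z)) →
        Z ⊆ Zstar) := by
  have hdisjYW := Set.disjoint_left.mp hYW
  have hZsW : Zstar ⊆ W := by rw [hZstar]; exact fun z hz => hz.1
  constructor
  · have hyz : ∀ y ∈ Y, ∀ z ∈ Zstar, y ≠ z := by
      intro y hy z hz heq
      exact hdisjYW hy (mem_of_eq_mem heq (hZsW hz))
    refine (msep_iff hyz).mpr ?_
    intro y hy z hz w
    by_contra hw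
    have hyZ : y ∉ Zstar := fun hm => hdisjYW hy (hZsW hm)
    obtain ⟨zi, hziZ, ρ, hρ, _⟩ := L2 (G := G) hZsW w hz hyZ hw
    have hzi' := hziZ
    rw [hZstar] at hzi'
    obtain ⟨hziW, hsep⟩ := hzi'
    have hyz' : ∀ y' ∈ Y, ∀ u ∈ ({zi} : Set V), y' ≠ u := by
      intro y' hy' u hu heq
      exact hdisjYW hy' (mem_of_eq_mem heq (mem_of_eq_mem (mem_singleton' hu) hziW))
    exact hρ ((msep_iff hyz').mp hsep y hy zi rfl ρ)
  · intro Z hZW hsep zi hziZ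
    rw [hZstar]
    refine ⟨hZW hziZ, ?_⟩
    have hyz' : ∀ y ∈ Y, ∀ u ∈ ({zi} : Set V), y ≠ u := by
      intro y hy u hu heq
      exact hdisjYW hy (mem_of_eq_mem heq (mem_of_eq_mem (mem_singleton' hu) (hZW hziZ)))
    refine (msep_iff hyz').mpr ?_
    intro y hy u hu w
    by_contra hw
    have huzi : u = zi := mem_singleton' hu
    subst huzi
    have hyZ : y ∉ Z := fun hm => hdisjYW hy (hZW hm)
    obtain ⟨v, hvZ, ρ, hρ, _⟩ := L1 (G := G) hZW hziZ w rfl hyZ hw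
    have hyzZ : ∀ y' ∈ Y, ∀ z ∈ Z, y' ≠ z := fun y' hy' z hz heq =>
      hdisjYW hy' (mem_of_eq_mem heq (hZW hz))
    exact hρ ((msep_iff hyzZ).mp hsep y hy v hvZ ρ)
end

section
/- Latent projection commutes with node splitting: let G(V ∪ H) be a DAG with observed vertices V and hidden vertices H, let A ⊆ V be an intervention set with values a, let G(V ∪ H)(a) be the SWIG obtained by node splitting, and let G(V) be the latent projection of G(V ∪ H) onto V. Then the latent projection of the SWIG G(V ∪ H)(a) onto the random vertices V and fixed vertices a equals the SWIG (G(V))(a) obtained by node splitting the latent projection: the two graphs have exactly the same random vertices, fixed vertices, directed edges, and bidirected edges. -/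
/-- The latent projection of a DAG `G(V ∪ H)` onto `V`: `i → j` iff there is a directed
path from `i` to `j` with all intermediate vertices in `H`, and `i ↔ j` iff there is a path
`i ← ⋯ → j` with all intermediate vertices in `H` and no head-to-head collisions at a
vertex of `H` (equivalently, a hidden vertex with directed paths through `H` to both `i`
and `j`). -/
def latProjDag {V H : Type} (G : MixedGraph (V ⊕ H)) : MixedGraph V where
  dir i j := ∃ u, G.dir (Sum.inl i) u ∧
    Relation.ReflTransGen (fun s t => G.dir s t ∧ ∃ h, s = Sum.inr h) u (Sum.inl j)
  bi i j := i ≠ j ∧ ∃ h : H,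
    Relation.TransGen (fun s t => G.dir s t ∧ ∃ h', s = Sum.inr h') (Sum.inr h)
      (Sum.inl i) ∧
    Relation.TransGen (fun s t => G.dir s t ∧ ∃ h', s = Sum.inr h') (Sum.inr h)
      (Sum.inl j)
  bi_symm := fun _ _ h => ⟨h.1.symm, h.2.choose, h.2.choose_spec.2, h.2.choose_spec.1⟩

/-- The vertices of the projected SWIG, viewed inside the SWIG of the full DAG:
the random vertex `Sum.inl v` is the random half of `v`, and the fixed vertex `Sum.inr v`
is the fixed half of `v`. -/
def swigEmbed {V H : Type} : (V ⊕ V) → ((V ⊕ H) ⊕ (V ⊕ H))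
  | Sum.inl v => Sum.inl (Sum.inl v)
  | Sum.inr v => Sum.inr (Sum.inl v)

/-- The latent projection of a SWIG `S` over `V ∪ H` (hidden vertices being the random
halves of `H`) onto the random vertices `V` and the fixed vertices: there is a directed
edge from a (random or fixed) vertex `x` to a random vertex `j` iff there is a directed
path in `S` between the corresponding vertices with all intermediate vertices hidden, and
a bidirected edge `i ↔ j` iff there is a path `i ← ⋯ → j` in `S` with all intermediate
vertices hidden and no head-to-head collisions at hidden vertices. -/
def latProjSwig {V H : Type} (S : MixedGraph ((V ⊕ H) ⊕ (V ⊕ H))) : MixedGraph (V ⊕ V) where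
  dir x y :=
    match y with
    | Sum.inl j => ∃ u, S.dir (swigEmbed x) u ∧
        Relation.ReflTransGen (fun s t => S.dir s t ∧ ∃ h, s = Sum.inl (Sum.inr h)) u
          (Sum.inl (Sum.inl j))
    | Sum.inr _ => False
  bi x y :=
    match x, y with
    | Sum.inl i, Sum.inl j => i ≠ j ∧ ∃ h : H,
        Relation.TransGen (fun s t => S.dir s t ∧ ∃ h', s = Sum.inl (Sum.inr h'))
          (Sum.inl (Sum.inr h)) (Sum.inl (Sum.inl i)) ∧
        Relation.TransGen (fun s t => S.dir s t ∧ ∃ h', s = Sum.inl (Sum.inr h'))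
          (Sum.inl (Sum.inr h)) (Sum.inl (Sum.inl j))
    | _, _ => False
  bi_symm := by
    rintro (i | i) (j | j) h
    · exact ⟨h.1.symm, h.2.choose, h.2.choose_spec.2, h.2.choose_spec.1⟩
    · exact False.elim h
    · exact False.elim h
    · exact False.elim h

/-- **Latent projection commutes with node splitting**: for a DAG `G(V ∪ H)` and an
intervention set `A ⊆ V`, the latent projection of the SWIG `G(V ∪ H)(a)` onto the random
vertices `V` and the fixed vertices `a` equals the SWIG `(G(V))(a)` obtained by node
splitting the latent projection `G(V)`: the two graphs have the same random vertices, the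
same fixed vertices, the same directed edges and the same bidirected edges. -/
theorem latent_projection_commutes_with_splitting {V H : Type}
    (G : MixedGraph (V ⊕ H)) (hDAG : ∀ x y, ¬ G.bi x y) (hacyc : G.Acyclic)
    (A : Set V) :
    ∀ x y : V ⊕ V,
      ((latProjSwig (G.swig (Sum.inl '' A))).dir x y ↔
          ((latProjDag G).swig A).dir x y) ∧
        ((latProjSwig (G.swig (Sum.inl '' A))).bi x y ↔
          ((latProjDag G).swig A).bi x y) := by
  classical
  set S := G.swig (Sum.inl '' A) with hS
  set R : (V ⊕ H) → (V ⊕ H) → Prop :=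
    fun s t => G.dir s t ∧ ∃ h, s = Sum.inr h with hR
  set R' : ((V ⊕ H) ⊕ (V ⊕ H)) → ((V ⊕ H) ⊕ (V ⊕ H)) → Prop :=
    fun s t => S.dir s t ∧ ∃ h, s = Sum.inl (Sum.inr h) with hR'
  have hstep : ∀ s t, R s t → R' (Sum.inl s) (Sum.inl t) := by
    rintro s t ⟨hd, h, rfl⟩
    refine ⟨?_, h, rfl⟩
    show S.dir (Sum.inl (Sum.inr h)) (Sum.inl t)
    rw [hS]
    exact ⟨hd, by rintro ⟨w, _, hww⟩; exact Sum.inl_ne_inr hww⟩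
  have hstep' : ∀ s t, R' s t → ∃ s' t', s = Sum.inl s' ∧ t = Sum.inl t' ∧ R s' t' := by
    rintro s t ⟨hd, h, rfl⟩
    rcases t with t' | t'
    · refine ⟨Sum.inr h, t', rfl, rfl, ?_, h, rfl⟩
      have : G.dir (Sum.inr h) t' ∧ (Sum.inr h : V ⊕ H) ∉ Sum.inl '' A := by
        rw [hS] at hd; exact hd
      exact this.1
    · rw [hS] at hd; exact hd.elim
  have rtg_fwd : ∀ u x : V ⊕ H, Relation.ReflTransGen R u x →
      Relation.ReflTransGen R' (Sum.inl u) (Sum.inl x) := by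
    intro u x h
    induction h with
    | refl => exact Relation.ReflTransGen.refl
    | @tail b c hab hbc ih => exact ih.tail (hstep _ _ hbc)
  have rtg_bwd : ∀ u x, Relation.ReflTransGen R' u x →
      ∀ u', u = Sum.inl u' → ∃ x', x = Sum.inl x' ∧ Relation.ReflTransGen R u' x' := by
    intro u x h
    induction h with
    | refl => exact fun u' hu => ⟨u', hu, Relation.ReflTransGen.refl⟩
    | @tail b c hab hbc ih =>
        intro u' hu
        obtain ⟨b', hb', hrb⟩ := ih u' hu
        subst hb'
        obtain ⟨s', t', hs, ht, hst⟩ := hstep' _ _ hbc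
        subst ht
        obtain rfl : b' = s' := Sum.inl.inj hs
        exact ⟨t', rfl, hrb.tail hst⟩
  have tg_fwd : ∀ u x : V ⊕ H, Relation.TransGen R u x →
      Relation.TransGen R' (Sum.inl u) (Sum.inl x) := by
    intro u x h
    induction h with
    | single step => exact Relation.TransGen.single (hstep _ _ step)
    | @tail b c hab hbc ih => exact ih.tail (hstep _ _ hbc)
  have tg_bwd : ∀ u x, Relation.TransGen R' u x →
      ∀ u', u = Sum.inl u' → ∃ x', x = Sum.inl x' ∧ Relation.TransGen R u' x' := by
    intro u x h
    induction h with
    | @single b step =>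
        intro u' hu
        subst hu
        obtain ⟨s', t', hs, ht, hst⟩ := hstep' _ _ step
        subst ht
        obtain rfl : u' = s' := Sum.inl.inj hs
        exact ⟨t', rfl, Relation.TransGen.single hst⟩
    | @tail b c hab hbc ih =>
        intro u' hu
        obtain ⟨b', hb', hrb⟩ := ih u' hu
        subst hb'
        obtain ⟨s', t', hs, ht, hst⟩ := hstep' _ _ hbc
        subst ht
        obtain rfl : b' = s' := Sum.inl.inj hs
        exact ⟨t', rfl, hrb.tail hst⟩
  have hmem : ∀ v : V, (Sum.inl v : V ⊕ H) ∈ Sum.inl '' A ↔ v ∈ A := by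
    intro v
    constructor
    · rintro ⟨w, hw, hww⟩; exact Sum.inl.inj hww ▸ hw
    · intro hv; exact ⟨v, hv, rfl⟩
  rintro (i | i) (j | j)
  · constructor
    · constructor
      · rintro ⟨u, hd, hru⟩
        rcases u with u' | u'
        · have hd' : G.dir (Sum.inl i) u' ∧ (Sum.inl i : V ⊕ H) ∉ Sum.inl '' A := by
            rw [hS] at hd; exact hd
          obtain ⟨x', hx, hr⟩ := rtg_bwd _ _ hru u' rfl
          obtain rfl : Sum.inl j = x' := Sum.inl.inj hx
          exact ⟨⟨u', hd'.1, hr⟩, fun hA => hd'.2 ((hmem i).2 hA)⟩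
        · rw [hS] at hd; exact hd.elim
      · rintro ⟨⟨u', hd, hr⟩, hA⟩
        refine ⟨Sum.inl u', ?_, rtg_fwd _ _ hr⟩
        show S.dir (Sum.inl (Sum.inl i)) (Sum.inl u')
        rw [hS]
        exact ⟨hd, fun h => hA ((hmem i).1 h)⟩
    · constructor
      · rintro ⟨hne, h, h1, h2⟩
        refine ⟨hne, h, ?_, ?_⟩
        · obtain ⟨x', hx, hr⟩ := tg_bwd _ _ h1 (Sum.inr h) rfl
          obtain rfl : Sum.inl i = x' := Sum.inl.inj hx
          exact hr
        · obtain ⟨x', hx, hr⟩ := tg_bwd _ _ h2 (Sum.inr h) rfl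
          obtain rfl : Sum.inl j = x' := Sum.inl.inj hx
          exact hr
      · rintro ⟨hne, h, h1, h2⟩
        exact ⟨hne, h, tg_fwd _ _ h1, tg_fwd _ _ h2⟩
  · exact ⟨⟨fun h => h.elim, fun h => h.elim⟩, ⟨fun h => h.elim, fun h => h.elim⟩⟩
  · constructor
    · constructor
      · rintro ⟨u, hd, hru⟩
        rcases u with u' | u'
        · have hd' : G.dir (Sum.inl i) u' ∧ (Sum.inl i : V ⊕ H) ∈ Sum.inl '' A := by
            rw [hS] at hd; exact hd
          obtain ⟨x', hx, hr⟩ := rtg_bwd _ _ hru u' rfl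
          obtain rfl : Sum.inl j = x' := Sum.inl.inj hx
          exact ⟨⟨u', hd'.1, hr⟩, (hmem i).1 hd'.2⟩
        · rw [hS] at hd; exact hd.elim
      · rintro ⟨⟨u', hd, hr⟩, hA⟩
        refine ⟨Sum.inl u', ?_, rtg_fwd _ _ hr⟩
        show S.dir (Sum.inr (Sum.inl i)) (Sum.inl u')
        rw [hS]
        exact ⟨hd, (hmem i).2 hA⟩
    · exact ⟨fun h => h.elim, fun h => h.elim⟩
  · exact ⟨⟨fun h => h.elim, fun h => h.elim⟩, ⟨fun h => h.elim, fun h => h.elim⟩⟩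
end
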